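/- arXiv:1502.05807 — 4 statements merged into one kernel-verified Lean document; each statement's English description precedes it below -/
import Mathlib

section
/- Let H = I - H̃ be an m×m real matrix with H̃ strictly lower triangular, let 𝒜 = 𝒜_{L,δ}, and suppose μ ≥ 0 satisfies ‖H̃‖_{∞→∞} + μ/δ ≤ L. For any y ∈ ℝ^m with ‖y‖_∞ ≤ μ, define recursively q_n = round_𝒜(y_n + Σ_{j<n} H̃_{n,j} u_j) and u_n = y_n + Σ_{j<n} H̃_{n,j} u_j − q_n. Then y − q = H u and ‖u‖_∞ ≤ δ. -/
open Matrix MeasureTheory Finset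
noncomputable section

/-- Euclidean norm of a vector. -/
def norm2 {ι : Type*} [Fintype ι] (v : ι → ℝ) : ℝ := Real.sqrt (∑ i, (v i)^2)
/-- Sup norm of a vector. -/
def normInf {ι : Type*} (v : ι → ℝ) : ℝ := sSup {t | ∃ i, t = |v i|}
/-- ℓ∞ → ℓ2 operator norm. -/
def normInfTo2 {ι κ : Type*} [Fintype ι] [Fintype κ] (A : Matrix κ ι ℝ) : ℝ :=
  sSup {t | ∃ v : ι → ℝ, (∀ j, |v j| ≤ 1) ∧ t = norm2 (A.mulVec v)}
/-- ℓ2 → ℓ2 (spectral) operator norm. -/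
def norm2To2 {ι κ : Type*} [Fintype ι] [Fintype κ] (A : Matrix κ ι ℝ) : ℝ :=
  sSup {t | ∃ v : ι → ℝ, norm2 v ≤ 1 ∧ t = norm2 (A.mulVec v)}
/-- Smallest singular value. -/
def sigmaMin {ι κ : Type*} [Fintype ι] [Fintype κ] (A : Matrix κ ι ℝ) : ℝ :=
  sInf {t | ∃ v : ι → ℝ, norm2 v = 1 ∧ t = norm2 (A.mulVec v)}
/-- ℓ∞ → ℓ∞ operator norm (max absolute row sum). -/
def normInfInf {ι κ : Type*} [Fintype ι] (A : Matrix κ ι ℝ) : ℝ :=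
  sSup {t | ∃ i, t = ∑ j, |A i j|}
/-- The alphabet 𝒜_{L,δ}: L points, spacing 2δ, symmetric about 0. -/
def alphabet (L : ℕ) (δ : ℝ) : Set ℝ := {w | ∃ j : Fin L, w = (2*(j:ℝ) - (L:ℝ) + 1) * δ}
/-- Pseudoinverse of a full-column-rank matrix: A† = (AᵀA)⁻¹Aᵀ. -/
def pinv {ι : Type*} [Fintype ι] {k : ℕ} (A : Matrix ι (Fin k) ℝ) : Matrix (Fin k) ι ℝ :=
  (Aᵀ*A)⁻¹ * Aᵀ

lemma round_exists (L : ℕ) (hL : 0 < L) (δ : ℝ) (hδ : 0 < δ) (w : ℝ)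
    (hw : |w| ≤ (L:ℝ) * δ) : ∃ a ∈ alphabet L δ, |w - a| ≤ δ := by
  have hx : |w/δ| ≤ (L:ℝ) := by
    rw [abs_div, abs_of_pos hδ, div_le_iff₀ hδ]; exact hw
  set x : ℝ := w/δ with hxdef
  set t : ℝ := (x + L)/2 with htdef
  have hx1 := (abs_le.1 hx).1
  have hx2 := (abs_le.1 hx).2
  have ht0 : 0 ≤ t := by rw [htdef]; linarith
  have htL : t ≤ (L:ℝ) := by rw [htdef]; linarith
  set k : ℕ := min (L-1) ⌊t⌋₊ with hkdef
  have hkL : k < L := by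
    have : L - 1 < L := Nat.sub_lt hL one_pos
    exact lt_of_le_of_lt (min_le_left _ _) this
  have hjt : (k:ℝ) ≤ t ∧ t ≤ (k:ℝ) + 1 := by
    by_cases h : ⌊t⌋₊ ≤ L - 1
    · have hk : k = ⌊t⌋₊ := min_eq_right h
      constructor
      · rw [hk]; exact Nat.floor_le ht0
      · rw [hk]; exact le_of_lt (Nat.lt_floor_add_one t)
    · push_neg at h
      have hk : k = L - 1 := min_eq_left (le_of_lt h)
      have hfl : ((L:ℝ)) ≤ ⌊t⌋₊ := by
        have : L ≤ ⌊t⌋₊ := by omega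
        exact_mod_cast this
      have htge : (L:ℝ) ≤ t := le_trans hfl (Nat.floor_le ht0)
      have hteq : t = (L:ℝ) := le_antisymm htL htge
      have hkcast : (k:ℝ) = (L:ℝ) - 1 := by
        rw [hk]; rw [Nat.cast_sub hL]; simp
      constructor
      · rw [hkcast, hteq]; linarith
      · rw [hkcast, hteq]; linarith
  refine ⟨(2*(k:ℝ) - L + 1) * δ, ⟨⟨k, hkL⟩, by simp⟩, ?_⟩
  have hw' : w = x * δ := by rw [hxdef]; field_simp
  have : w - (2*(k:ℝ) - L + 1) * δ = (x - (2*(k:ℝ) - L + 1)) * δ := by rw [hw']; ring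
  rw [this, abs_mul, abs_of_pos hδ]
  have hb : |x - (2*(k:ℝ) - L + 1)| ≤ 1 := by
    rw [abs_le]
    constructor <;> [skip; skip] <;>
    · have h1 := hjt.1; have h2 := hjt.2
      rw [htdef] at h1 h2; linarith
  nlinarith [hδ.le]

/-- stability of the greedy noise-shaping quantizer. -/
theorem stmt_1 (m L : ℕ) (hL : 0 < L) (δ μ : ℝ) (hδ : 0 < δ) (hμ : 0 ≤ μ)
    (Ht : Matrix (Fin m) (Fin m) ℝ)
    (hstrict : ∀ i j : Fin m, i ≤ j → Ht i j = 0)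
    (hnorm : ∀ i : Fin m, (∑ j, |Ht i j|) + μ/δ ≤ (L:ℝ))
    (y u q : Fin m → ℝ) (hy : ∀ n, |y n| ≤ μ)
    (hq : ∀ n : Fin m,
      q n ∈ alphabet L δ ∧
      (∀ a ∈ alphabet L δ,
        |y n + (∑ j ∈ Finset.univ.filter (· < n), Ht n j * u j) - q n| ≤
        |y n + (∑ j ∈ Finset.univ.filter (· < n), Ht n j * u j) - a|))
    (hu : ∀ n : Fin m,
      u n = y n + (∑ j ∈ Finset.univ.filter (· < n), Ht n j * u j) - q n) :
    (y - q = (1 - Ht).mulVec u) ∧ (∀ n, |u n| ≤ δ) := by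
  have key : ∀ n : Fin m, |u n| ≤ δ := by
    have H : ∀ k : ℕ, ∀ n : Fin m, (n:ℕ) = k → |u n| ≤ δ := by
      intro k
      induction k using Nat.strong_induction_on with
      | _ k ih0 =>
      intro n hn
      have ih : ∀ j : Fin m, j < n → |u j| ≤ δ := fun j hj =>
        ih0 (j:ℕ) (by rw [← hn]; exact Fin.lt_def.mp hj) j rfl
      set w : ℝ := y n + (∑ j ∈ Finset.univ.filter (· < n), Ht n j * u j) with hwdef
      have hwb : |w| ≤ (L:ℝ) * δ := by
        have h1 : |w| ≤ |y n| + ∑ j ∈ Finset.univ.filter (· < n), |Ht n j| * |u j| := by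
          refine (abs_add_le _ _).trans ?_
          gcongr
          exact (Finset.abs_sum_le_sum_abs _ _).trans (le_of_eq (by simp [abs_mul]))
        have h2 : ∑ j ∈ Finset.univ.filter (· < n), |Ht n j| * |u j| ≤
            ∑ j ∈ Finset.univ.filter (· < n), |Ht n j| * δ := by
          apply Finset.sum_le_sum
          intro j hj
          have hjn : j < n := by simpa using hj
          exact mul_le_mul_of_nonneg_left (ih j hjn) (abs_nonneg _)
        have h3 : ∑ j ∈ Finset.univ.filter (· < n), |Ht n j| ≤ ∑ j, |Ht n j| :=
          Finset.sum_le_sum_of_subset_of_nonneg (Finset.filter_subset _ _)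
            (fun _ _ _ => abs_nonneg _)
        have h4 := hnorm n
        have h5 : μ / δ * δ = μ := by field_simp
        have h6 : (∑ j, |Ht n j|) * δ + μ ≤ (L:ℝ) * δ := by
          nlinarith [hδ.le]
        calc |w| ≤ |y n| + (∑ j ∈ Finset.univ.filter (· < n), |Ht n j|) * δ := by
              rw [Finset.sum_mul]; refine h1.trans ?_; gcongr with j hj <;> simp
          _ ≤ μ + (∑ j, |Ht n j|) * δ := by
              have := hy n; nlinarith [hδ.le]
          _ ≤ (L:ℝ) * δ := by linarith
      obtain ⟨a, ha, haw⟩ := round_exists L hL δ hδ w hwb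
      have := (hq n).2 a ha
      rw [hu n, ← hwdef]
      exact le_trans this haw
    intro n; exact H _ n rfl
  refine ⟨?_, key⟩
  funext n
  have hsum : ∑ j, Ht n j * u j = ∑ j ∈ Finset.univ.filter (· < n), Ht n j * u j := by
    symm
    apply Finset.sum_subset (Finset.filter_subset _ _)
    intro j _ hj
    have : ¬ j < n := by simpa using hj
    rw [hstrict n j (le_of_not_gt this), zero_mul]
  rw [Matrix.sub_mulVec, Matrix.one_mulVec]
  show y n - q n = u n - Ht.mulVec u n
  simp only [Matrix.mulVec, dotProduct]
  rw [hsum]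
  have := hu n
  linarith
end
end

section
/- Among all left inverses Ψ of a full-column-rank m×k matrix Φ (with H an invertible m×m matrix such that H⁻¹Φ has full column rank), the quantity ‖ΨH‖_{2→2} is minimized by Ψ = (H⁻¹Φ)†H⁻¹; that is, for every Ψ with ΨΦ = I_k, ‖ΨH‖_{2→2} ≥ 1/σ_min(H⁻¹Φ). -/
open Matrix MeasureTheory Finset
noncomputable section

/-! If `Ψ * Φ = 1`, then `B := Ψ * H` is a left inverse of `A := H⁻¹ * Φ`, so every unit vector `v`
satisfies `1 = ‖B (A v)‖ ≤ ‖B‖ ‖A v‖`; taking the infimum over `v` gives `‖B‖ σ_min(A) ≥ 1`.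
The operator bound `‖B w‖ ≤ ‖B‖ ‖w‖` comes from identifying `norm2To2` with Mathlib's L2 operator
norm on matrices. -/

open scoped Matrix.Norms.L2Operator

section

variable {ι κ : Type*} [Fintype ι] [Fintype κ]

lemma norm2_eq_norm_toLp (v : ι → ℝ) : norm2 v = ‖WithLp.toLp 2 v‖ := by
  simp [norm2, EuclideanSpace.norm_eq, sq_abs]

lemma norm2To2_eq_l2_opNorm [DecidableEq ι] (A : Matrix κ ι ℝ) : norm2To2 A = ‖A‖ := by
  rw [norm2To2, l2_opNorm_def, ← ContinuousLinearMap.sSup_unitClosedBall_eq_norm]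
  congr 1
  ext t
  constructor
  · rintro ⟨v, hv, rfl⟩
    exact ⟨WithLp.toLp 2 v, by simpa [norm2_eq_norm_toLp] using hv, by simp [norm2_eq_norm_toLp]⟩
  · rintro ⟨x, hx, rfl⟩
    exact ⟨WithLp.ofLp x, by simpa [norm2_eq_norm_toLp] using hx, by rw [norm2_eq_norm_toLp]; rfl⟩

lemma norm2_mulVec_le (A : Matrix κ ι ℝ) (v : ι → ℝ) :
    norm2 (A *ᵥ v) ≤ norm2To2 A * norm2 v := by
  classical
  simpa [norm2To2_eq_l2_opNorm, norm2_eq_norm_toLp] using A.l2_opNorm_mulVec (WithLp.toLp 2 v)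

lemma norm2To2_nonneg (A : Matrix κ ι ℝ) : 0 ≤ norm2To2 A :=
  Real.sSup_nonneg fun _ ⟨_, _, ht⟩ => ht ▸ Real.sqrt_nonneg _

lemma sigmaMin_nonneg (A : Matrix κ ι ℝ) : 0 ≤ sigmaMin A :=
  Real.sInf_nonneg fun _ ⟨_, _, ht⟩ => ht ▸ Real.sqrt_nonneg _

lemma inv_sigmaMin_le_norm2To2_of_mul_eq_one [DecidableEq ι] {A : Matrix κ ι ℝ} {B : Matrix ι κ ℝ}
    (hBA : B * A = 1) : (sigmaMin A)⁻¹ ≤ norm2To2 B := by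
  rcases (sigmaMin_nonneg A).eq_or_lt with hzero | hpos
  · rw [← hzero, _root_.inv_zero]
    exact norm2To2_nonneg B
  have one_le : ∀ v, norm2 v = 1 → 1 ≤ norm2To2 B * norm2 (A *ᵥ v) := fun v hv => by
    simpa [Matrix.mulVec_mulVec, hBA, hv] using norm2_mulVec_le B (A *ᵥ v)
  obtain ⟨v, hv⟩ : ∃ v : ι → ℝ, norm2 v = 1 := by
    by_contra! hempty
    simp [sigmaMin, hempty] at hpos
  have hN : 0 < norm2To2 B :=
    pos_of_mul_pos_left (one_pos.trans_le (one_le v hv)) (Real.sqrt_nonneg _)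
  rw [inv_le_comm₀ hpos hN]
  refine le_csInf ⟨_, v, hv, rfl⟩ ?_
  rintro _ ⟨w, hw, rfl⟩
  rw [inv_le_iff_one_le_mul₀' hN]
  exact one_le w hw

end

theorem stmt_7_general (m k : ℕ) (Φ : Matrix (Fin m) (Fin k) ℝ)
    (H : Matrix (Fin m) (Fin m) ℝ) (hH : IsUnit H.det) :
    ∀ Ψ : Matrix (Fin k) (Fin m) ℝ, Ψ * Φ = 1 →
      1 / sigmaMin (H⁻¹ * Φ) ≤ norm2To2 (Ψ * H) := by
  intro Ψ hΨ
  rw [one_div]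
  apply inv_sigmaMin_le_norm2To2_of_mul_eq_one
  rw [Matrix.mul_assoc, ← Matrix.mul_assoc H, Matrix.mul_nonsing_inv H hH, Matrix.one_mul, hΨ]

/-- among left inverses Ψ of Φ, ‖ΨH‖_{2→2} ≥ 1/σ_min(H⁻¹Φ). -/
theorem stmt_7 (m k : ℕ) (hk : 0 < k) (Φ : Matrix (Fin m) (Fin k) ℝ)
    (H : Matrix (Fin m) (Fin m) ℝ) (hH : IsUnit H.det)
    (hfull : IsUnit ((H⁻¹ * Φ)ᵀ * (H⁻¹ * Φ)).det) :
    ∀ Ψ : Matrix (Fin k) (Fin m) ℝ, Ψ * Φ = 1 →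
      1 / sigmaMin (H⁻¹ * Φ) ≤ norm2To2 (Ψ * H) :=
  stmt_7_general m k Φ H hH
end
end

section
/- Let Φ be an m×k matrix of full column rank, H invertible m×m with H⁻¹Φ of full column rank, x ∈ ℝ^k, q ∈ ℝ^m, u ∈ ℝ^m with Φx − q = Hu, and Ψ := (H⁻¹Φ)†H⁻¹. Then ‖x − Ψq‖₂ ≤ (√m / σ_min(H⁻¹Φ)) · ‖u‖_∞. -/
open Matrix MeasureTheory Finset
noncomputable section

/- ## Auxiliary lemmas -/

lemma sum_sq_nonneg' {ι} [Fintype ι] (v : ι → ℝ) : 0 ≤ ∑ i, (v i)^2 :=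
  Finset.sum_nonneg fun _ _ => sq_nonneg _

lemma norm2_nonneg {ι} [Fintype ι] (v : ι → ℝ) : 0 ≤ norm2 v := Real.sqrt_nonneg _

lemma norm2_sq {ι} [Fintype ι] (v : ι → ℝ) : (norm2 v)^2 = ∑ i, (v i)^2 :=
  Real.sq_sqrt (sum_sq_nonneg' v)

lemma norm2_eq_zero_iff {ι} [Fintype ι] {v : ι → ℝ} : norm2 v = 0 ↔ v = 0 := by
  unfold norm2
  rw [Real.sqrt_eq_zero (sum_sq_nonneg' v)]
  constructor
  · intro h
    funext i
    have := (Finset.sum_eq_zero_iff_of_nonneg (fun i _ => sq_nonneg (v i))).1 h i (Finset.mem_univ i)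
    simpa [pow_eq_zero_iff] using this
  · intro h; simp [h]

lemma norm2_smul {ι} [Fintype ι] (c : ℝ) (v : ι → ℝ) : norm2 (c • v) = |c| * norm2 v := by
  unfold norm2
  simp only [Pi.smul_apply, smul_eq_mul, mul_pow, ← Finset.mul_sum]
  rw [Real.sqrt_mul (sq_nonneg c), Real.sqrt_sq_eq_abs]

lemma norm2_mono {ι} [Fintype ι] {v w : ι → ℝ} (h : ∑ i, (v i)^2 ≤ ∑ i, (w i)^2) :
    norm2 v ≤ norm2 w := Real.sqrt_le_sqrt h

lemma abs_le_normInf {ι} [Fintype ι] (v : ι → ℝ) (i : ι) : |v i| ≤ normInf v := by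
  apply le_csSup
  · have : {t | ∃ i, t = |v i|} = Set.range fun i => |v i| := by ext t; simp [eq_comm, Set.range]
    rw [this]; exact (Set.finite_range _).bddAbove
  · exact ⟨i, rfl⟩

lemma norm2_le_sqrt_mul_normInf (m : ℕ) (u : Fin m → ℝ) :
    norm2 u ≤ Real.sqrt m * normInf u := by
  rcases Nat.eq_zero_or_pos m with hm | hm
  · subst hm
    have h1 : norm2 u = 0 := by unfold norm2; simp
    have h2 : normInf u = 0 := by
      unfold normInf
      have : {t | ∃ i : Fin 0, t = |u i|} = ∅ := by ext t; simp [Fin.isEmpty.false]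
      rw [this, Real.sSup_empty]
    simp [h1, h2]
  · have hN : 0 ≤ normInf u := le_trans (abs_nonneg _) (abs_le_normInf u ⟨0, hm⟩)
    have hsum : ∑ i, (u i)^2 ≤ (m : ℝ) * (normInf u)^2 := by
      calc ∑ i, (u i)^2 ≤ ∑ _i : Fin m, (normInf u)^2 := by
            apply Finset.sum_le_sum
            intro i _
            have := abs_le_normInf u i
            calc (u i)^2 = |u i|^2 := (sq_abs _).symm
              _ ≤ (normInf u)^2 := pow_le_pow_left₀ (abs_nonneg _) this 2
        _ = (m : ℝ) * (normInf u)^2 := by simp [Finset.sum_const, nsmul_eq_mul]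
    calc norm2 u = Real.sqrt (∑ i, (u i)^2) := rfl
      _ ≤ Real.sqrt ((m:ℝ) * (normInf u)^2) := Real.sqrt_le_sqrt hsum
      _ = Real.sqrt m * normInf u := by
          rw [Real.sqrt_mul (Nat.cast_nonneg m), Real.sqrt_sq hN]

lemma norm2_continuous (k : ℕ) : Continuous (norm2 : (Fin k → ℝ) → ℝ) := by
  unfold norm2
  exact Real.continuous_sqrt.comp (continuous_finset_sum _ fun i _ => (continuous_apply i).pow 2)

lemma sphere_compact (k : ℕ) : IsCompact {v : Fin k → ℝ | norm2 v = 1} := by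
  have hclosed : IsClosed {v : Fin k → ℝ | norm2 v = 1} :=
    isClosed_eq (norm2_continuous k) continuous_const
  have hsub : {v : Fin k → ℝ | norm2 v = 1} ⊆
      Set.pi Set.univ (fun _ : Fin k => Set.Icc (-1:ℝ) 1) := by
    intro v hv i _
    have h1 : ∑ j, (v j)^2 = 1 := by
      have h := norm2_sq v
      rw [show norm2 v = 1 from hv] at h
      simpa using h.symm
    have h2 : (v i)^2 ≤ 1 := by
      rw [← h1]
      exact Finset.single_le_sum (fun j _ => sq_nonneg (v j)) (Finset.mem_univ i)
    constructor <;> nlinarith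
  exact (isCompact_univ_pi fun _ => isCompact_Icc).of_isClosed_subset hclosed hsub

lemma sigmaMin_pos {m k : ℕ} (B : Matrix (Fin m) (Fin k) ℝ) (hfull : IsUnit (Bᵀ*B).det)
    (hk : 0 < k) : 0 < sigmaMin B := by
  have hinj : ∀ v : Fin k → ℝ, B.mulVec v = 0 → v = 0 := by
    intro v hv
    have h1 : (Bᵀ*B).mulVec v = 0 := by
      rw [← Matrix.mulVec_mulVec, hv, Matrix.mulVec_zero]
    have h2 := congrArg (fun w => (Bᵀ*B)⁻¹.mulVec w) h1
    simpa [Matrix.mulVec_mulVec, Matrix.nonsing_inv_mul _ hfull] using h2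
  have hcont : Continuous fun v : Fin k → ℝ => norm2 (B.mulVec v) :=
    (norm2_continuous m).comp (B.mulVecLin).continuous_of_finiteDimensional
  have hone : norm2 (Pi.single (⟨0, hk⟩ : Fin k) (1:ℝ)) = 1 := by
    unfold norm2
    rw [Finset.sum_eq_single (⟨0, hk⟩ : Fin k)]
    · simp
    · intro j _ hj; simp [Pi.single_apply, hj]
    · simp
  have hne : {v : Fin k → ℝ | norm2 v = 1}.Nonempty := ⟨_, hone⟩
  obtain ⟨v₀, hv₀, hmin⟩ := (sphere_compact k).exists_isMinOn hne hcont.continuousOn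
  have hpos : 0 < norm2 (B.mulVec v₀) := by
    rcases (norm2_nonneg (B.mulVec v₀)).lt_or_eq with hlt | heq
    · exact hlt
    · exfalso
      have hz := hinj v₀ (norm2_eq_zero_iff.1 heq.symm)
      rw [Set.mem_setOf_eq, hz] at hv₀
      rw [norm2_eq_zero_iff.2 rfl] at hv₀
      norm_num at hv₀
  refine lt_of_lt_of_le hpos (le_csInf ⟨_, v₀, hv₀, rfl⟩ ?_)
  rintro t ⟨v, hv1, rfl⟩
  exact isMinOn_iff.1 hmin v hv1

lemma sigmaMin_mul_le {m k : ℕ} (B : Matrix (Fin m) (Fin k) ℝ) (w : Fin k → ℝ) :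
    sigmaMin B * norm2 w ≤ norm2 (B.mulVec w) := by
  rcases eq_or_ne (norm2 w) 0 with h | h
  · rw [h, mul_zero]; exact norm2_nonneg _
  have hw : 0 < norm2 w := lt_of_le_of_ne (norm2_nonneg w) (Ne.symm h)
  have hbdd : BddBelow {t | ∃ v : Fin k → ℝ, norm2 v = 1 ∧ t = norm2 (B.mulVec v)} :=
    ⟨0, by rintro t ⟨v, _, rfl⟩; exact norm2_nonneg _⟩
  have hunit : norm2 ((norm2 w)⁻¹ • w) = 1 := by
    rw [norm2_smul, abs_of_pos (inv_pos.2 hw), inv_mul_cancel₀ h]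
  have h1 : sigmaMin B ≤ norm2 (B.mulVec ((norm2 w)⁻¹ • w)) :=
    csInf_le hbdd ⟨_, hunit, rfl⟩
  rw [Matrix.mulVec_smul, norm2_smul, abs_of_pos (inv_pos.2 hw), inv_mul_eq_div] at h1
  exact (le_div_iff₀ hw).1 h1

lemma proj_contract {m k : ℕ} (B : Matrix (Fin m) (Fin k) ℝ) (hfull : IsUnit (Bᵀ*B).det)
    (u : Fin m → ℝ) : norm2 ((B * pinv B).mulVec u) ≤ norm2 u := by
  set P := B * pinv B with hP
  have hPt : Pᵀ = P := by
    rw [hP]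
    unfold pinv
    simp only [Matrix.transpose_mul, Matrix.transpose_nonsing_inv, Matrix.transpose_transpose,
      Matrix.mul_assoc]
  have hPP : P * P = P := by
    rw [hP]
    unfold pinv
    simp only [Matrix.mul_assoc]
    rw [← Matrix.mul_assoc Bᵀ B ((Bᵀ*B)⁻¹ * Bᵀ), ← Matrix.mul_assoc (Bᵀ*B)⁻¹ (Bᵀ*B),
      Matrix.nonsing_inv_mul _ hfull, Matrix.one_mul]
  set p := P.mulVec u with hp
  have hfix : P.mulVec p = p := by
    rw [hp, Matrix.mulVec_mulVec, hPP]
  have key : ∑ i, (p i)^2 = ∑ i, p i * u i := by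
    have h1 : p ⬝ᵥ p = p ⬝ᵥ u := by
      calc p ⬝ᵥ p = p ⬝ᵥ P.mulVec u := by rw [hp]
        _ = P.vecMul p ⬝ᵥ u := Matrix.dotProduct_mulVec p P u
        _ = Pᵀ.mulVec p ⬝ᵥ u := by rw [Matrix.mulVec_transpose]
        _ = P.mulVec p ⬝ᵥ u := by rw [hPt]
        _ = p ⬝ᵥ u := by rw [hfix]
    simpa [dotProduct, sq] using h1
  have cs := Finset.sum_mul_sq_le_sq_mul_sq Finset.univ p u
  have hle : ∑ i, (p i)^2 ≤ ∑ i, (u i)^2 := by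
    rcases (sum_sq_nonneg' p).lt_or_eq with hpos | hzero
    · rw [← key] at cs
      nlinarith
    · rw [← hzero]; exact sum_sq_nonneg' u
  exact norm2_mono hle

/-- error bound for reconstruction with the H⁻¹-dual. -/
theorem stmt_8 (m k : ℕ) (Φ : Matrix (Fin m) (Fin k) ℝ)
    (H : Matrix (Fin m) (Fin m) ℝ) (hH : IsUnit H.det)
    (hΦ : IsUnit (Φᵀ * Φ).det)
    (hfull : IsUnit ((H⁻¹ * Φ)ᵀ * (H⁻¹ * Φ)).det)
    (x : Fin k → ℝ) (q u : Fin m → ℝ)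
    (h : Φ.mulVec x - q = H.mulVec u) :
    norm2 (x - (pinv (H⁻¹ * Φ) * H⁻¹).mulVec q) ≤
      Real.sqrt m / sigmaMin (H⁻¹ * Φ) * normInf u := by
  set B := H⁻¹ * Φ with hB
  rcases Nat.eq_zero_or_pos k with hk | hk
  · subst hk
    have hL : norm2 (x - (pinv B * H⁻¹).mulVec q) = 0 := by unfold norm2; simp
    have hσ : sigmaMin B = 0 := by
      unfold sigmaMin
      have hset : {t | ∃ v : Fin 0 → ℝ, norm2 v = 1 ∧ t = norm2 (B.mulVec v)} = ∅ := by
        ext t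
        simp only [Set.mem_setOf_eq, Set.mem_empty_iff_false, iff_false, not_exists]
        intro v hv
        have h0 : norm2 v = 0 := by unfold norm2; simp
        rw [h0] at hv
        norm_num at hv
      rw [hset, Real.sInf_empty]
    rw [hL, hσ]
    simp
  · have h1 : pinv B * B = 1 := by
      unfold pinv
      rw [Matrix.mul_assoc]
      exact Matrix.nonsing_inv_mul _ hfull
    have hu : B.mulVec x - H⁻¹.mulVec q = u := by
      have h2 : H⁻¹.mulVec (Φ.mulVec x - q) = H⁻¹.mulVec (H.mulVec u) := by rw [h]
      rw [Matrix.mulVec_sub, Matrix.mulVec_mulVec, Matrix.mulVec_mulVec,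
        Matrix.nonsing_inv_mul H hH, Matrix.one_mulVec] at h2
      exact h2
    have hw : x - (pinv B * H⁻¹).mulVec q = (pinv B).mulVec u := by
      rw [← hu, Matrix.mulVec_sub, Matrix.mulVec_mulVec, Matrix.mulVec_mulVec, h1,
        Matrix.one_mulVec]
    have hσ : 0 < sigmaMin B := sigmaMin_pos B hfull hk
    have chain : sigmaMin B * norm2 ((pinv B).mulVec u) ≤ Real.sqrt m * normInf u := by
      calc sigmaMin B * norm2 ((pinv B).mulVec u)
          ≤ norm2 (B.mulVec ((pinv B).mulVec u)) := sigmaMin_mul_le B _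
        _ = norm2 ((B * pinv B).mulVec u) := by rw [Matrix.mulVec_mulVec]
        _ ≤ norm2 u := proj_contract B hfull u
        _ ≤ Real.sqrt m * normInf u := norm2_le_sqrt_mul_normInf m u
    rw [hw, div_mul_eq_mul_div]
    rw [le_div_iff₀ hσ, mul_comm]
    exact chain
end
end

section
/- Let Φ ∈ ℝ^{m×N}, let Δ be a map satisfying ‖x − Δ(Φx + e)‖₂ ≤ Cε for all k-sparse x ∈ ℝ^N and all e with ‖e‖₂ ≤ ε. Suppose x is k-sparse with support T, q ∈ ℝ^m with ‖Φx − q‖₂ ≤ ε, and min_{i∈T}|x_i| > 2Cε. Let x̃ = Δ(q). Then every index in T has |x̃_i| > Cε while every index outside T has |x̃_i| ≤ Cε; in particular, the set of indices of the k largest-in-magnitude entries of x̃ equals T (when |T| = k). -/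
open Matrix MeasureTheory Finset
noncomputable section

lemma abs_le_norm2 {ι : Type*} [Fintype ι] (v : ι → ℝ) (i : ι) : |v i| ≤ norm2 v := by
  rw [norm2, ← Real.sqrt_sq_eq_abs]
  exact Real.sqrt_le_sqrt (Finset.single_le_sum (fun j _ => sq_nonneg (v j)) (Finset.mem_univ i))

/-- support recovery from the coarse recovery stage. -/
theorem stmt_19 (m N k : ℕ) (Φ : Matrix (Fin m) (Fin N) ℝ)
    (Δ : (Fin m → ℝ) → (Fin N → ℝ)) (C ε : ℝ)
    (hΔ : ∀ x : Fin N → ℝ, (Finset.univ.filter (fun i => x i ≠ 0)).card ≤ k →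
      ∀ e : Fin m → ℝ, norm2 e ≤ ε → norm2 (x - Δ (Φ.mulVec x + e)) ≤ C * ε)
    (x : Fin N → ℝ) (T : Finset (Fin N))
    (hT : T = Finset.univ.filter (fun i => x i ≠ 0)) (hsparse : T.card ≤ k)
    (q : Fin m → ℝ) (hq : norm2 (Φ.mulVec x - q) ≤ ε)
    (hmin : ∀ i ∈ T, 2 * C * ε < |x i|)
    (xt : Fin N → ℝ) (hxt : xt = Δ q) :
    (∀ i ∈ T, C * ε < |xt i|) ∧ (∀ i ∉ T, |xt i| ≤ C * ε) ∧
    (T.card = k → ∀ S : Finset (Fin N), S.card = k →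
      (∀ i ∈ S, ∀ j ∉ S, |xt j| ≤ |xt i|) → S = T) := by
  have hx : x - Δ q = x - Δ (Φ.mulVec x + (q - Φ.mulVec x)) := by
    have : Φ.mulVec x + (q - Φ.mulVec x) = q := by abel
    rw [this]
  have hsp : (Finset.univ.filter (fun i => x i ≠ 0)).card ≤ k := hT ▸ hsparse
  have he : norm2 (q - Φ.mulVec x) ≤ ε := by
    have : q - Φ.mulVec x = -(Φ.mulVec x - q) := by abel
    rw [this]
    have : norm2 (-(Φ.mulVec x - q)) = norm2 (Φ.mulVec x - q) := by
      unfold norm2; congr 1; apply Finset.sum_congr rfl; intro i _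
      simp only [Pi.neg_apply, Pi.sub_apply]; ring
    rw [this]; exact hq
  have key : norm2 (x - Δ q) ≤ C * ε := by
    rw [hx]; exact hΔ x hsp _ he
  have hcomp : ∀ i, |x i - xt i| ≤ C * ε := by
    intro i
    calc |x i - xt i| = |(x - Δ q) i| := by rw [hxt]; rfl
    _ ≤ norm2 (x - Δ q) := abs_le_norm2 _ i
    _ ≤ C * ε := key
  have h1 : ∀ i ∈ T, C * ε < |xt i| := by
    intro i hi
    have := hmin i hi
    have h2 := hcomp i
    have : |x i| ≤ |x i - xt i| + |xt i| := by
      calc |x i| = |(x i - xt i) + xt i| := by ring_nf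
      _ ≤ _ := abs_add_le _ _
    linarith [hmin i hi]
  have h2 : ∀ i ∉ T, |xt i| ≤ C * ε := by
    intro i hi
    have hx0 : x i = 0 := by
      by_contra h
      exact hi (hT ▸ Finset.mem_filter.mpr ⟨Finset.mem_univ i, h⟩)
    have := hcomp i
    rw [hx0] at this
    simpa using this
  refine ⟨h1, h2, fun hk S hS hmono => ?_⟩
  have hTS : T ⊆ S := by
    intro i hiT
    by_contra hiS
    have hlt : C * ε < |xt i| := h1 i hiT
    -- S has an element not in T (since cards equal and i ∈ T \\ S)
    have : ¬ S ⊆ T := by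
      intro hST
      have : S = T := Finset.eq_of_subset_of_card_le hST (by omega)
      exact hiS (this ▸ hiT)
    obtain ⟨j, hjS, hjT⟩ := Finset.not_subset.mp this
    have := hmono j hjS i hiS
    have := h2 j hjT
    linarith
  exact (Finset.eq_of_subset_of_card_le hTS (by omega)).symm
end
end
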